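/- Suppose a nonnegative C¹ function v : [0, s] → ℝ satisfies v' ≤ C₁ v + C₂ √v + C₃ with v(0) = A₀ ≥ 0, where C₁ ≥ 0 and C₂, C₃ > 0. Then v(t) ≤ e^{C₁ s}[(2C₂ s + √(A₀ + C₃²/C₂²))² − C₃²/C₂²] for all t ∈ [0, s]. -/

import Mathlib

/-!
Put `w = √(e^{-C₁ t} v + C₃²/C₂²)`. The factor `e^{-C₁ t} ≤ 1` absorbs the linear term of the
inequality, and each of the two remaining terms `e^{-C₁ t} C₂ √v` and `e^{-C₁ t} C₃` is at most
`C₂ w`, so `(w²)' ≤ 2 C₂ w`, i.e. `w' ≤ C₂`. Hence `w(t) ≤ w(0) + C₂ t`; squaring and undoing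
the exponential factor gives the bound.
-/

open Real Set

theorem sqrt_le_sqrt_add_mul_of_hasDerivAt_le {u u' : ℝ → ℝ} {a b c : ℝ}
    (hpos : ∀ t ∈ Icc a b, 0 < u t) (hu : ∀ t ∈ Icc a b, HasDerivAt u (u' t) t)
    (hle : ∀ t ∈ Icc a b, u' t ≤ 2 * c * √(u t)) :
    ∀ t ∈ Icc a b, √(u t) ≤ √(u a) + c * (t - a) := by
  have hsqrt : ∀ t ∈ Icc a b, HasDerivAt (fun x ↦ √(u x)) (u' t / (2 * √(u t))) t :=
    fun t ht ↦ (hu t ht).sqrt (hpos t ht).ne'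
  have hbound : ∀ t ∈ Icc a b, u' t / (2 * √(u t)) ≤ c := fun t ht ↦ by
    have : 0 < √(u t) := sqrt_pos.2 (hpos t ht)
    rw [div_le_iff₀ (by positivity)]
    linarith [hle t ht]
  have hline (t : ℝ) : HasDerivAt (fun x ↦ √(u a) + c * (x - a)) c t := by
    simpa using ((hasDerivAt_id t).sub_const a).const_mul c |>.const_add (√(u a))
  refine fun t ht ↦ image_le_of_deriv_right_le_deriv_boundary
    (fun x hx ↦ (hsqrt x hx).continuousAt.continuousWithinAt)
    (fun x hx ↦ (hsqrt x (Ico_subset_Icc_self hx)).hasDerivWithinAt) (by simp)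
    (fun x _ ↦ (hline x).continuousAt.continuousWithinAt) (fun x _ ↦ (hline x).hasDerivWithinAt)
    (fun x hx ↦ hbound x (Ico_subset_Icc_self hx)) ht

theorem mul_add_le_two_mul_sqrt {e x C₂ C₃ : ℝ} (he₀ : 0 ≤ e) (he₁ : e ≤ 1) (hx : 0 ≤ x)
    (hC₂ : 0 < C₂) (hC₃ : 0 ≤ C₃) :
    e * (C₂ * √x + C₃) ≤ 2 * C₂ * √(e * x + C₃ ^ 2 / C₂ ^ 2) := by
  set w := e * x + C₃ ^ 2 / C₂ ^ 2
  have hx_part : e * √x ≤ √w := by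
    rw [← sqrt_sq he₀, ← sqrt_mul (sq_nonneg e)]
    refine sqrt_le_sqrt ?_
    have : e ^ 2 * x ≤ e * x := by nlinarith [mul_nonneg he₀ hx]
    have : 0 ≤ C₃ ^ 2 / C₂ ^ 2 := by positivity
    linarith
  have hC_part : e * C₃ ≤ C₂ * √w := by
    have hK : C₃ / C₂ ≤ √w := by
      rw [le_sqrt (by positivity) (by positivity), div_pow]
      linarith [mul_nonneg he₀ hx]
    calc e * C₃ ≤ C₃ := mul_le_of_le_one_left hC₃ he₁
      _ = C₂ * (C₃ / C₂) := by field_simp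
      _ ≤ C₂ * √w := by gcongr
  nlinarith

theorem sqrt_exp_neg_mul_add_le {s C₁ C₂ C₃ : ℝ} {v v' : ℝ → ℝ}
    (hC₁ : 0 ≤ C₁) (hC₂ : 0 < C₂) (hC₃ : 0 < C₃)
    (hnonneg : ∀ t ∈ Icc 0 s, 0 ≤ v t)
    (hderiv : ∀ t ∈ Icc 0 s, HasDerivAt v (v' t) t)
    (hineq : ∀ t ∈ Icc 0 s, v' t ≤ C₁ * v t + C₂ * √(v t) + C₃) :
    ∀ t ∈ Icc 0 s, √(exp (-C₁ * t) * v t + C₃ ^ 2 / C₂ ^ 2) ≤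
      √(v 0 + C₃ ^ 2 / C₂ ^ 2) + C₂ * t := by
  set K := C₃ ^ 2 / C₂ ^ 2
  have hw : ∀ t ∈ Icc 0 s, HasDerivAt (fun x ↦ exp (-C₁ * x) * v x + K)
      (exp (-C₁ * t) * (v' t - C₁ * v t)) t := fun t ht ↦ by
    have hexp : HasDerivAt (fun x ↦ exp (-C₁ * x)) (exp (-C₁ * t) * -C₁) t := by
      simpa using ((hasDerivAt_id t).const_mul (-C₁)).exp
    exact ((hexp.mul (hderiv t ht)).add_const K).congr_deriv (by ring)
  have hbound : ∀ t ∈ Icc 0 s, exp (-C₁ * t) * (v' t - C₁ * v t) ≤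
      2 * C₂ * √(exp (-C₁ * t) * v t + K) := fun t ht ↦ by
    have he₁ : exp (-C₁ * t) ≤ 1 := exp_le_one_iff.2 (by nlinarith [ht.1])
    refine le_trans ?_ (mul_add_le_two_mul_sqrt (exp_pos _).le he₁ (hnonneg t ht) hC₂ hC₃.le)
    gcongr
    linarith [hineq t ht]
  have hpos : ∀ t ∈ Icc 0 s, 0 < exp (-C₁ * t) * v t + K := fun t ht ↦
    add_pos_of_nonneg_of_pos (mul_nonneg (exp_pos _).le (hnonneg t ht)) (by positivity)
  simpa using sqrt_le_sqrt_add_mul_of_hasDerivAt_le hpos hw hbound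

theorem self_bounding_ode_general (s C₁ C₂ C₃ A₀ : ℝ)
    (hC₁ : 0 ≤ C₁) (hC₂ : 0 < C₂) (hC₃ : 0 < C₃)
    (v v' : ℝ → ℝ)
    (hv0 : v 0 = A₀)
    (hnonneg : ∀ t ∈ Set.Icc (0 : ℝ) s, 0 ≤ v t)
    (hderiv : ∀ t ∈ Set.Icc (0 : ℝ) s, HasDerivAt v (v' t) t)
    (hineq : ∀ t ∈ Set.Icc (0 : ℝ) s, v' t ≤ C₁ * v t + C₂ * Real.sqrt (v t) + C₃) :
    ∀ t ∈ Set.Icc (0 : ℝ) s,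
      v t ≤ Real.exp (C₁ * s) *
        ((2 * C₂ * s + Real.sqrt (A₀ + C₃ ^ 2 / C₂ ^ 2)) ^ 2 - C₃ ^ 2 / C₂ ^ 2) := by
  intro t ht
  have hs : 0 ≤ s := ht.1.trans ht.2
  set K := C₃ ^ 2 / C₂ ^ 2
  set B := 2 * C₂ * s + √(A₀ + K)
  have hsqrt : √(exp (-C₁ * t) * v t + K) ≤ B := by
    have := sqrt_exp_neg_mul_add_le hC₁ hC₂ hC₃ hnonneg hderiv hineq t ht
    have hCt : C₂ * t ≤ 2 * C₂ * s := by nlinarith [ht.2]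
    rw [hv0] at this
    linarith
  have hscaled : exp (-C₁ * t) * v t ≤ B ^ 2 - K := by
    linarith [(sqrt_le_left (by positivity)).1 hsqrt]
  have hK : 0 ≤ B ^ 2 - K := le_trans (mul_nonneg (exp_pos _).le (hnonneg t ht)) hscaled
  calc v t = exp (C₁ * t) * (exp (-C₁ * t) * v t) := by
        rw [← mul_assoc, ← exp_add]; simp
    _ ≤ exp (C₁ * t) * (B ^ 2 - K) := by gcongr
    _ ≤ exp (C₁ * s) * (B ^ 2 - K) := by gcongr; exact ht.2

/-- Self-bounding ODE estimate: if a nonnegative `C¹` function `v` on `[0,s]` satisfies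
`v' ≤ C₁ v + C₂ √v + C₃` with `v(0) = A₀ ≥ 0`, then
`v(t) ≤ e^{C₁ s} [(2C₂ s + √(A₀ + C₃²/C₂²))² − C₃²/C₂²]` on `[0,s]`. -/
theorem self_bounding_ode (s C₁ C₂ C₃ A₀ : ℝ)
    (hs : 0 < s) (hC₁ : 0 ≤ C₁) (hC₂ : 0 < C₂) (hC₃ : 0 < C₃) (hA₀ : 0 ≤ A₀)
    (v v' : ℝ → ℝ)
    (hv0 : v 0 = A₀)
    (hnonneg : ∀ t ∈ Set.Icc (0 : ℝ) s, 0 ≤ v t)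
    (hderiv : ∀ t ∈ Set.Icc (0 : ℝ) s, HasDerivAt v (v' t) t)
    (hcont : ContinuousOn v' (Set.Icc 0 s))
    (hineq : ∀ t ∈ Set.Icc (0 : ℝ) s, v' t ≤ C₁ * v t + C₂ * Real.sqrt (v t) + C₃) :
    ∀ t ∈ Set.Icc (0 : ℝ) s,
      v t ≤ Real.exp (C₁ * s) *
        ((2 * C₂ * s + Real.sqrt (A₀ + C₃ ^ 2 / C₂ ^ 2)) ^ 2 - C₃ ^ 2 / C₂ ^ 2) :=
  self_bounding_ode_general s C₁ C₂ C₃ A₀ hC₁ hC₂ hC₃ v v' hv0 hnonneg hderiv hineq
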